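/- Growth bound for the linearized NLS flow: Let q > 0, and let φ, ψ: [0,∞) × ℝ → ℝ be smooth, 2qπ-periodic in x, solving ∂_tφ = −∂_x²ψ and ∂_tψ = ∂_x²φ + 2φ. Assume τ := sup over k ∈ ℤ of Re(|k/q|·√(2 − (k/q)²)) is positive. Then for every s' ≥ 0 there is a constant C, depending only on q and s', such that for all t ≥ 0, ‖φ(t)‖_{H^{s'}(qT)} + ‖ψ(t)‖_{H^{s'}(qT)} ≤ C e^{τt} (‖φ(0)‖_{H^{s'}(qT)} + ‖ψ(0)‖_{H^{s'}(qT)}). -/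

import Mathlib

open MeasureTheory Filter Set Topology ComplexConjugate
open scoped ContDiff

noncomputable section

/-- `k`-th Fourier coefficient of a `2qπ`-periodic function on `qT`. -/
def fCoeff (q : ℝ) (f : ℝ → ℂ) (k : ℤ) : ℂ :=
  ∫ x in (-(q * Real.pi))..(q * Real.pi),
    f x * Complex.exp (-(Complex.I) * (k : ℂ) * (x : ℂ) / (q : ℂ))

/-- Sobolev `H^s(qT)` norm, defined via Fourier coefficients. -/
def hNorm (q s : ℝ) (f : ℝ → ℂ) : ℝ :=
  Real.sqrt (∑' k : ℤ, (1 + |(k : ℝ) / q|) ^ (2 * s) * ‖fCoeff q f k‖ ^ 2)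

/-- Membership in `H^s(qT)`. -/
def MemHs (q s : ℝ) (f : ℝ → ℂ) : Prop :=
  Function.Periodic f (2 * q * Real.pi) ∧
  MeasureTheory.MemLp f 2
    (MeasureTheory.volume.restrict (Set.Ioc (-(q * Real.pi)) (q * Real.pi))) ∧
  Summable (fun k : ℤ => (1 + |(k : ℝ) / q|) ^ (2 * s) * ‖fCoeff q f k‖ ^ 2)

/-- `L²(qT)` norm. -/
def l2Norm (q : ℝ) (f : ℝ → ℂ) : ℝ :=
  Real.sqrt (∫ x in (-(q * Real.pi))..(q * Real.pi), ‖f x‖ ^ 2)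

/-- Complex cotangent. -/
def ccot (z : ℂ) : ℂ := Complex.cos z / Complex.sin z

/-- Principal value of the integral of `F` over a period centered at `α`. -/
def pvIntegral (q : ℝ) (F : ℝ → ℂ) (α : ℝ) : ℂ :=
  limUnder (nhdsWithin (0 : ℝ) (Set.Ioi 0)) fun δ =>
    ∫ β in Set.Ioc (α - q * Real.pi) (α + q * Real.pi) \ Metric.ball α δ, F β

/-- Hilbert transform associated with the curve `ζ` on `qT`. -/
def curveHilbert (q : ℝ) (ζ f : ℝ → ℂ) (α : ℝ) : ℂ :=
  (1 : ℂ) / (((2 * q * Real.pi : ℝ) : ℂ) * Complex.I) *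
    pvIntegral q (fun β => deriv ζ β * ccot ((ζ α - ζ β) / ((2 * q : ℝ) : ℂ)) * f β) α

/-- Commutator `[g, H_ζ] f = g ⬝ H_ζ f − H_ζ (g f)`. -/
def commutatorH (q : ℝ) (ζ g f : ℝ → ℂ) (α : ℝ) : ℂ :=
  g α * curveHilbert q ζ f α - curveHilbert q ζ (fun β => g β * f β) α

/-- Chord-arc condition with constants `c₀ < c₁`. -/
def ChordArc (ζ : ℝ → ℂ) (c₀ c₁ : ℝ) : Prop :=
  ∀ α β : ℝ, c₀ * |α - β| ≤ ‖ζ α - ζ β‖ ∧ ‖ζ α - ζ β‖ ≤ c₁ * |α - β|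

/-- Material derivative `D_t = ∂_t + b ∂_α`. -/
def WDt (b : ℝ → ℝ → ℝ) (f : ℝ → ℝ → ℂ) (α t : ℝ) : ℂ :=
  deriv (fun τ => f α τ) t + ((b α t : ℝ) : ℂ) * deriv (fun β => f β t) α

/-- Wu's-coordinates gravity water wave system on `qT`, for times in `I`:
periodicity and chord-arc of the interface, the defining equations for `b` and `A`,
the momentum equation, and the two holomorphicity constraints. -/
def IsWuSolutionOn (q : ℝ) (I : Set ℝ) (ζ : ℝ → ℝ → ℂ) (b A : ℝ → ℝ → ℝ) : Prop :=
  (∀ t ∈ I, Function.Periodic (fun α => ζ α t - (α : ℂ)) (2 * q * Real.pi)) ∧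
  (∃ c₀ c₁ : ℝ, 0 < c₀ ∧ c₀ < c₁ ∧ ∀ t ∈ I, ChordArc (fun α => ζ α t) c₀ c₁) ∧
  (∀ t ∈ I, ∀ α : ℝ,
    ((b α t : ℝ) : ℂ) - curveHilbert q (ζ · t) (fun β => ((b β t : ℝ) : ℂ)) α =
      -commutatorH q (ζ · t) (fun β => WDt b ζ β t)
        (fun β => (conj (deriv (ζ · t) β) - 1) / deriv (ζ · t) β) α) ∧
  (∀ t ∈ I, ∀ α : ℝ,
    (((A α t : ℝ) : ℂ) - 1) - curveHilbert q (ζ · t) (fun β => ((A β t : ℝ) : ℂ) - 1) α =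
      Complex.I * commutatorH q (ζ · t) (fun β => WDt b ζ β t)
        (fun β => deriv (fun x => conj (WDt b ζ x t)) β / deriv (ζ · t) β) α +
      Complex.I * commutatorH q (ζ · t) (fun β => WDt b (WDt b ζ) β t)
        (fun β => (conj (deriv (ζ · t) β) - 1) / deriv (ζ · t) β) α) ∧
  (∀ t ∈ I, ∀ α : ℝ,
    WDt b (WDt b ζ) α t - Complex.I * ((A α t : ℝ) : ℂ) * deriv (ζ · t) α = -Complex.I) ∧
  (∀ t ∈ I, ∀ α : ℝ,
    conj (WDt b ζ α t) - curveHilbert q (ζ · t) (fun β => conj (WDt b ζ β t)) α = 0) ∧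
  (∀ t ∈ I, ∀ α : ℝ,
    (conj (ζ α t) - (α : ℂ)) - curveHilbert q (ζ · t) (fun β => conj (ζ β t) - (β : ℂ)) α = 0)

namespace NLSAux



def eK (q : ℝ) (k : ℤ) (x : ℝ) : ℂ :=
  Complex.exp (-(Complex.I) * (k : ℂ) * (x : ℂ) / (q : ℂ))

lemma fCoeff_eq (q : ℝ) (f : ℝ → ℂ) (k : ℤ) :
    fCoeff q f k = ∫ x in (-(q * Real.pi))..(q * Real.pi), f x * eK q k x := rfl

lemma eK_def' (q : ℝ) (k : ℤ) :
    eK q k = fun x : ℝ => Complex.exp ((-(Complex.I) * (k : ℂ) / (q : ℂ)) * (x : ℂ)) := by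
  funext x
  show Complex.exp _ = Complex.exp _
  congr 1
  ring

lemma eK_norm (q : ℝ) (k : ℤ) (x : ℝ) : ‖eK q k x‖ = 1 := by
  have h : -(Complex.I) * (k : ℂ) * (x : ℂ) / (q : ℂ)
      = ((-(k * x / q) : ℝ) : ℂ) * Complex.I := by
    push_cast; ring
  show ‖Complex.exp _‖ = 1
  rw [h, Complex.norm_exp_ofReal_mul_I]

lemma eK_hasDerivAt (q : ℝ) (k : ℤ) (x : ℝ) :
    HasDerivAt (eK q k) (-(Complex.I) * (k : ℂ) / (q : ℂ) * eK q k x) x := by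
  rw [eK_def']
  have h0 : HasDerivAt (fun y : ℝ => (y : ℂ)) 1 x := by
    simpa using (hasDerivAt_id x).ofReal_comp
  have h1 := (h0.const_mul (-(Complex.I) * (k : ℂ) / (q : ℂ))).cexp
  simpa [mul_comm] using h1

lemma eK_continuous (q : ℝ) (k : ℤ) : Continuous (eK q k) := by
  rw [eK_def']
  exact Complex.continuous_exp.comp (continuous_const.mul Complex.continuous_ofReal)

lemma norm_fCoeff_le (q : ℝ) (hq : 0 < q) {f : ℝ → ℂ} {M : ℝ}
    (hM : ∀ x ∈ Set.uIcc (-(q * Real.pi)) (q * Real.pi), ‖f x‖ ≤ M) (k : ℤ) :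
    ‖fCoeff q f k‖ ≤ M * (2 * q * Real.pi) := by
  have hqpi : 0 ≤ q * Real.pi := by positivity
  have h := intervalIntegral.norm_integral_le_of_norm_le_const
    (a := -(q * Real.pi)) (b := q * Real.pi) (C := M)
    (f := fun x => f x * eK q k x) ?_
  · rw [fCoeff_eq]
    calc ‖∫ x in (-(q * Real.pi))..(q * Real.pi), f x * eK q k x‖
        ≤ M * |q * Real.pi - -(q * Real.pi)| := h
      _ = M * (2 * q * Real.pi) := by
          rw [abs_of_nonneg (by linarith)]; ring
  · intro x hx
    have hx' : x ∈ Set.uIcc (-(q * Real.pi)) (q * Real.pi) :=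
      Set.uIoc_subset_uIcc hx
    rw [norm_mul, eK_norm, mul_one]
    exact hM x hx'

lemma periodic_deriv {f : ℝ → ℂ} {p : ℝ} (hf : Function.Periodic f p) :
    Function.Periodic (deriv f) p := by
  intro x
  have h1 : deriv (fun y => f (y + p)) x = deriv f (x + p) := deriv_comp_add_const f p x
  have h2 : (fun y => f (y + p)) = f := funext fun y => hf y
  rw [← h1, h2]

/-- Integration by parts: Fourier coefficient of the derivative. -/
lemma fCoeff_deriv (q : ℝ) (hq : 0 < q) {f : ℝ → ℂ}
    (hf : Differentiable ℝ f) (hf' : Continuous (deriv f))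
    (hper : Function.Periodic f (2 * q * Real.pi)) (k : ℤ) :
    fCoeff q (deriv f) k = Complex.I * (k : ℂ) / (q : ℂ) * fCoeff q f k := by
  set a : ℝ := -(q * Real.pi) with ha
  set b : ℝ := q * Real.pi with hb
  have hibp := intervalIntegral.integral_mul_deriv_eq_deriv_mul
    (a := a) (b := b)
    (u := eK q k) (u' := fun x => -(Complex.I) * (k : ℂ) / (q : ℂ) * eK q k x)
    (v := f) (v' := deriv f)
    (fun x _ => eK_hasDerivAt q k x)
    (fun x _ => (hf x).hasDerivAt)
    ((continuous_const.mul (eK_continuous q k)).intervalIntegrable a b)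
    (hf'.intervalIntegrable a b)
  have hfb : f b = f a := by
    have : b = a + 2 * q * Real.pi := by rw [ha, hb]; ring
    rw [this]
    exact hper a
  have heb : eK q k b = eK q k a := by
    show Complex.exp _ = Complex.exp _
    have hq' : (q : ℂ) ≠ 0 := by exact_mod_cast hq.ne'
    have h1 : -(Complex.I) * (k : ℂ) * (b : ℂ) / (q : ℂ)
        = -(Complex.I) * (k : ℂ) * (Real.pi : ℂ) := by
      rw [hb]; push_cast; field_simp
    have h2 : -(Complex.I) * (k : ℂ) * ((a : ℝ) : ℂ) / (q : ℂ)
        = Complex.I * (k : ℂ) * (Real.pi : ℂ) := by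
      rw [ha, hb]; push_cast; field_simp
    rw [h1, h2]
    rw [show -(Complex.I) * (k : ℂ) * (Real.pi : ℂ)
        = Complex.I * (k : ℂ) * (Real.pi : ℂ) + (-k : ℤ) * (2 * (Real.pi : ℂ) * Complex.I) by
      push_cast; ring]
    rw [Complex.exp_add, Complex.exp_int_mul_two_pi_mul_I, mul_one]
  have hL : (∫ x in a..b, eK q k x * deriv f x) = fCoeff q (deriv f) k := by
    rw [fCoeff_eq]
    congr 1
    funext x
    ring
  have hR : (∫ x in a..b, (-(Complex.I) * (k : ℂ) / (q : ℂ) * eK q k x) * f x)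
      = -(Complex.I) * (k : ℂ) / (q : ℂ) * fCoeff q f k := by
    rw [fCoeff_eq, ← intervalIntegral.integral_const_mul]
    congr 1
    funext x
    ring
  rw [hL, hR, hfb, heb] at hibp
  rw [hibp]
  ring

lemma periodic_iterate_deriv {f : ℝ → ℂ} {p : ℝ} (hf : Function.Periodic f p) (m : ℕ) :
    Function.Periodic (deriv^[m] f) p := by
  induction m with
  | zero => exact hf
  | succ n ih =>
      rw [Function.iterate_succ_apply']
      exact periodic_deriv ih

lemma fCoeff_iterate (q : ℝ) (hq : 0 < q) {f : ℝ → ℂ} (hf : ContDiff ℝ ∞ f)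
    (hper : Function.Periodic f (2 * q * Real.pi)) (m : ℕ) (k : ℤ) :
    fCoeff q (deriv^[m] f) k = (Complex.I * (k : ℂ) / (q : ℂ)) ^ m * fCoeff q f k := by
  induction m with
  | zero => simp
  | succ n ih =>
      rw [Function.iterate_succ_apply']
      have hD : ContDiff ℝ ∞ (deriv^[n] f) := hf.iterate_deriv n
      rw [fCoeff_deriv q hq (hD.differentiable (by simp))
        ((contDiff_infty_iff_deriv.mp hD).2.continuous)
        (periodic_iterate_deriv hper n) k, ih]
      ring

lemma fCoeff_decay (q : ℝ) (hq : 0 < q) {f : ℝ → ℂ} (hf : ContDiff ℝ ∞ f)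
    (hper : Function.Periodic f (2 * q * Real.pi)) (m : ℕ) :
    ∃ M : ℝ, 0 ≤ M ∧ ∀ k : ℤ, k ≠ 0 → ‖fCoeff q f k‖ ≤ M / |(k : ℝ)| ^ m := by
  obtain ⟨C, hC⟩ := (isCompact_uIcc (a := -(q * Real.pi))
    (b := q * Real.pi)).exists_bound_of_continuousOn
    ((hf.iterate_deriv m).continuous.continuousOn)
  set M0 : ℝ := max C 0 with hM0
  refine ⟨M0 * (2 * q * Real.pi) * q ^ m, by positivity, fun k hk => ?_⟩
  have hknorm : (0:ℝ) < |(k : ℝ)| := by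
    simp only [abs_pos]
    exact_mod_cast hk
  have h1 : ‖fCoeff q (deriv^[m] f) k‖ ≤ M0 * (2 * q * Real.pi) :=
    norm_fCoeff_le q hq (fun x hx => le_trans (hC x hx) (le_max_left _ _)) k
  have h2 := fCoeff_iterate q hq hf hper m k
  have h3 : ‖(Complex.I * (k : ℂ) / (q : ℂ)) ^ m‖ = (|(k:ℝ)| / q) ^ m := by
    rw [norm_pow]
    congr 1
    rw [norm_div, norm_mul, Complex.norm_I, one_mul]
    congr 1
    · rw [show ((k : ℂ)) = (((k : ℝ) : ℝ) : ℂ) by push_cast; ring, Complex.norm_real,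
        Real.norm_eq_abs]
    · rw [Complex.norm_real, Real.norm_eq_abs, abs_of_pos hq]
  have h4 : ‖fCoeff q (deriv^[m] f) k‖ = (|(k:ℝ)| / q) ^ m * ‖fCoeff q f k‖ := by
    rw [h2, norm_mul, h3]
  rw [h4] at h1
  have hqm : (0:ℝ) < (|(k:ℝ)| / q) ^ m := by positivity
  rw [div_eq_mul_inv, ← mul_comm]
  calc ‖fCoeff q f k‖ = ((|(k:ℝ)| / q) ^ m * ‖fCoeff q f k‖) / (|(k:ℝ)| / q) ^ m := by
        field_simp
    _ ≤ (M0 * (2 * q * Real.pi)) / (|(k:ℝ)| / q) ^ m := by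
        gcongr
    _ = (|(k:ℝ)| ^ m)⁻¹ * (M0 * (2 * q * Real.pi) * q ^ m) := by
        rw [div_pow]
        field_simp

lemma summable_weight (q : ℝ) (hq : 0 < q) (s' : ℝ) {f : ℝ → ℂ}
    (hf : ContDiff ℝ ∞ f) (hper : Function.Periodic f (2 * q * Real.pi)) :
    Summable (fun k : ℤ => (1 + |(k : ℝ) / q|) ^ (2 * s') * ‖fCoeff q f k‖ ^ 2) := by
  set m : ℕ := ⌈s'⌉₊ with hm
  obtain ⟨M, hM0, hM⟩ := fCoeff_decay q hq hf hper (m + 1)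
  set D : ℝ := (1 + 1 / q) ^ (2 * m) * M ^ 2 with hD
  set T : ℤ → ℝ := fun k => (1 + |(k : ℝ) / q|) ^ (2 * s') * ‖fCoeff q f k‖ ^ 2 with hT
  have hTnn : ∀ k, 0 ≤ T k := by
    intro k
    apply mul_nonneg _ (by positivity)
    positivity
  have hsum_inv : Summable (fun k : ℤ => D * (1 / (k : ℝ) ^ 2)) :=
    (Real.summable_one_div_int_pow.mpr (by norm_num : 1 < 2)).mul_left D
  have hsum_ind : Summable (fun k : ℤ => if k = 0 then T 0 else 0) := by
    apply summable_of_ne_finset_zero (s := {0})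
    intro k hk
    simp only [Finset.mem_singleton] at hk
    simp [hk]
  apply Summable.of_nonneg_of_le hTnn _ (hsum_inv.add hsum_ind)
  intro k
  by_cases hk : k = 0
  · subst hk
    simp
  · have hk1 : (1 : ℝ) ≤ |(k : ℝ)| := by
      rw [show ((1:ℝ)) = ((1:ℤ) : ℝ) by norm_num, ← Int.cast_abs]
      exact_mod_cast Int.one_le_abs hk
    have hkpos : (0:ℝ) < |(k : ℝ)| := lt_of_lt_of_le one_pos hk1
    have hw : (1 + |(k : ℝ) / q|) ^ (2 * s') ≤ (1 + 1/q) ^ (2*m) * |(k:ℝ)| ^ (2*m) := by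
      have hbase : (1:ℝ) ≤ 1 + |(k : ℝ) / q| := by
        have := abs_nonneg ((k:ℝ)/q); linarith
      have h1 : (1 + |(k : ℝ) / q|) ^ (2 * s') ≤ (1 + |(k : ℝ) / q|) ^ ((2*m : ℕ) : ℝ) := by
        apply Real.rpow_le_rpow_of_exponent_le hbase
        push_cast
        have := Nat.le_ceil s'
        linarith
      rw [Real.rpow_natCast] at h1
      refine h1.trans ?_
      rw [← mul_pow]
      apply pow_le_pow_left₀ (by positivity)
      rw [abs_div, abs_of_pos hq]
      have e : (1 + 1/q) * |(k:ℝ)| = |(k:ℝ)| + |(k:ℝ)| / q := by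
        field_simp
      rw [e]
      linarith
    have hns : ‖fCoeff q f k‖ ^ 2 ≤ M ^ 2 / |(k:ℝ)| ^ (2*m + 2) := by
      have := hM k hk
      have h2 : ‖fCoeff q f k‖ ^ 2 ≤ (M / |(k:ℝ)| ^ (m+1)) ^ 2 := by
        apply pow_le_pow_left₀ (norm_nonneg _) this
      refine h2.trans_eq ?_
      rw [div_pow, ← pow_mul]
      ring_nf
    calc T k ≤ ((1 + 1/q) ^ (2*m) * |(k:ℝ)| ^ (2*m)) * (M ^ 2 / |(k:ℝ)| ^ (2*m + 2)) := by
          apply mul_le_mul hw hns (by positivity) (by positivity)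
      _ = D * (1 / (k : ℝ) ^ 2) := by
          have hne : ((k:ℝ)) ≠ 0 := by exact_mod_cast hk
          rw [hD, pow_add, sq_abs]
          field_simp
      _ ≤ D * (1 / (k : ℝ) ^ 2) + (if k = 0 then T 0 else 0) := by
          simp [hk, hTnn 0]

/-- time partial derivative -/
def pt (Φ : ℝ → ℝ → ℝ) (x t : ℝ) : ℝ := deriv (fun τ' => Φ x τ') t

lemma curry_contDiff {Φ : ℝ → ℝ → ℝ} (hΦ : ContDiff ℝ ∞ (fun p : ℝ × ℝ => Φ p.1 p.2))
    (x : ℝ) : ContDiff ℝ ∞ (fun τ' => Φ x τ') :=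
  hΦ.comp (contDiff_const.prodMk contDiff_id)

lemma curry_contDiff' {Φ : ℝ → ℝ → ℝ} (hΦ : ContDiff ℝ ∞ (fun p : ℝ × ℝ => Φ p.1 p.2))
    (t : ℝ) : ContDiff ℝ ∞ (fun x => Φ x t) :=
  hΦ.comp (contDiff_id.prodMk contDiff_const)

lemma pt_hasDerivAt {Φ : ℝ → ℝ → ℝ} (hΦ : ContDiff ℝ ∞ (fun p : ℝ × ℝ => Φ p.1 p.2))
    (x t : ℝ) : HasDerivAt (fun τ' => Φ x τ') (pt Φ x t) t :=
  (((curry_contDiff hΦ x).differentiable (by simp)) t).hasDerivAt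

lemma pt_continuous {Φ : ℝ → ℝ → ℝ} (hΦ : ContDiff ℝ ∞ (fun p : ℝ × ℝ => Φ p.1 p.2)) :
    Continuous (fun p : ℝ × ℝ => pt Φ p.1 p.2) := by
  have hder : ∀ x t : ℝ, HasDerivAt (fun τ' => Φ x τ')
      ((fderiv ℝ (fun p : ℝ × ℝ => Φ p.1 p.2) (x, t)) (0, 1)) t := by
    intro x t
    have h1 : HasDerivAt (fun τ' : ℝ => ((x, τ') : ℝ × ℝ)) ((0 : ℝ), (1 : ℝ)) t :=
      (hasDerivAt_const t x).prodMk (hasDerivAt_id t)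
    exact ((hΦ.differentiable (by simp) (x, t)).hasFDerivAt).comp_hasDerivAt t h1
  have heq : (fun p : ℝ × ℝ => pt Φ p.1 p.2)
      = fun p : ℝ × ℝ => (fderiv ℝ (fun p : ℝ × ℝ => Φ p.1 p.2) p) (0, 1) := by
    funext p
    exact (hder p.1 p.2).deriv
  rw [heq]
  exact (hΦ.continuous_fderiv (by simp)).clm_apply continuous_const

lemma hasDerivAt_fCoeff_time (q : ℝ) {Φ : ℝ → ℝ → ℝ}
    (hΦ : ContDiff ℝ ∞ (fun p : ℝ × ℝ => Φ p.1 p.2)) (k : ℤ) (t₀ : ℝ) :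
    HasDerivAt (fun t => fCoeff q (fun x => ((Φ x t : ℝ) : ℂ)) k)
      (fCoeff q (fun x => ((pt Φ x t₀ : ℝ) : ℂ)) k) t₀ := by
  set a : ℝ := -(q * Real.pi)
  set b : ℝ := q * Real.pi
  set K : Set (ℝ × ℝ) := (Set.uIcc a b) ×ˢ (Set.Icc (t₀ - 1) (t₀ + 1)) with hK
  obtain ⟨M, hM⟩ := ((isCompact_uIcc (a := a)
    (b := b)).prod isCompact_Icc).exists_bound_of_continuousOn
    ((pt_continuous hΦ).continuousOn)
  have key := intervalIntegral.hasDerivAt_integral_of_dominated_loc_of_deriv_le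
    (𝕜 := ℝ) (μ := volume) (a := a) (b := b) (x₀ := t₀) (s := Metric.ball t₀ 1)
    (F := fun t x => ((Φ x t : ℝ) : ℂ) * eK q k x)
    (F' := fun t x => ((pt Φ x t : ℝ) : ℂ) * eK q k x)
    (bound := fun _ => M)
    (Metric.ball_mem_nhds t₀ one_pos) ?_ ?_ ?_ ?_ ?_ ?_
  · have h2 := key.2
    have e1 : (fun t => fCoeff q (fun x => ((Φ x t : ℝ) : ℂ)) k)
        = fun t => ∫ x in a..b, ((Φ x t : ℝ) : ℂ) * eK q k x := by
      funext t; exact fCoeff_eq q _ k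
    rw [fCoeff_eq, e1]
    exact h2
  · filter_upwards with t
    exact ((Complex.continuous_ofReal.comp
      ((curry_contDiff' hΦ t).continuous)).mul (eK_continuous q k)).aestronglyMeasurable
  · exact ((Complex.continuous_ofReal.comp
      ((curry_contDiff' hΦ t₀).continuous)).mul (eK_continuous q k)).intervalIntegrable a b
  · apply Continuous.aestronglyMeasurable
    apply Continuous.mul _ (eK_continuous q k)
    exact Complex.continuous_ofReal.comp
      ((pt_continuous hΦ).comp (continuous_id.prodMk continuous_const))
  · filter_upwards with x
    intro hx t ht
    rw [norm_mul, eK_norm, mul_one, Complex.norm_real, Real.norm_eq_abs]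
    have hxK : (x, t) ∈ K := by
      constructor
      · exact Set.uIoc_subset_uIcc hx
      · have : t ∈ Set.Ioo (t₀ - 1) (t₀ + 1) := by
          rwa [← Real.ball_eq_Ioo]
        exact Set.mem_Icc_of_Ioo this
    have := hM (x, t) hxK
    rwa [Real.norm_eq_abs] at this
  · exact intervalIntegrable_const
  · filter_upwards with x
    intro hx t ht
    exact ((pt_hasDerivAt hΦ x t).ofReal_comp).mul_const (eK q k x)

lemma normSq_hasDerivAt {w : ℝ → ℂ} {w' : ℂ} {s : ℝ} (hw : HasDerivAt w w' s) :
    HasDerivAt (fun s => ‖w s‖ ^ 2)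
      (2 * (w'.re * (w s).re + w'.im * (w s).im)) s := by
  have hre : HasDerivAt (fun s => (w s).re) w'.re s :=
    Complex.reCLM.hasFDerivAt.comp_hasDerivAt s hw
  have him : HasDerivAt (fun s => (w s).im) w'.im s :=
    Complex.imCLM.hasFDerivAt.comp_hasDerivAt s hw
  have h1 := (hre.mul hre).add (him.mul him)
  have heq : (fun s => ‖w s‖ ^ 2)
      = fun s => (w s).re * (w s).re + (w s).im * (w s).im := by
    funext s
    rw [← Complex.normSq_apply, Complex.sq_norm]
  rw [heq]
  refine h1.congr_deriv ?_
  ring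

lemma cauchy_schwarz_re (z w : ℂ) :
    |z.re * w.re + z.im * w.im| ≤ ‖z‖ * ‖w‖ := by
  have hz : ‖z‖ ^ 2 = z.re ^ 2 + z.im ^ 2 := by
    rw [Complex.sq_norm, Complex.normSq_apply]; ring
  have hw : ‖w‖ ^ 2 = w.re ^ 2 + w.im ^ 2 := by
    rw [Complex.sq_norm, Complex.normSq_apply]; ring
  have h1 : (z.re * w.re + z.im * w.im) ^ 2 ≤ (‖z‖ * ‖w‖) ^ 2 := by
    rw [mul_pow, hz, hw]
    nlinarith [sq_nonneg (z.re * w.im - z.im * w.re)]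
  have h2 : |z.re * w.re + z.im * w.im| = Real.sqrt ((z.re * w.re + z.im * w.im) ^ 2) :=
    (Real.sqrt_sq_eq_abs _).symm
  rw [h2]
  calc Real.sqrt ((z.re * w.re + z.im * w.im) ^ 2) ≤ Real.sqrt ((‖z‖ * ‖w‖) ^ 2) :=
        Real.sqrt_le_sqrt h1
    _ = ‖z‖ * ‖w‖ := Real.sqrt_sq (by positivity)

/-- Constancy + linear-growth for the degenerate modes. -/
lemma degenerate_bound {w z : ℝ → ℂ}
    (hcw : Continuous w) (hcz : Continuous z)
    (hw : ∀ s, 0 ≤ s → HasDerivAt w 0 s)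
    (hz : ∀ s, 0 ≤ s → HasDerivAt z (2 * w s) s)
    {t : ℝ} (ht : 0 ≤ t) :
    ‖w t‖ = ‖w 0‖ ∧ ‖z t‖ ≤ ‖z 0‖ + 2 * t * ‖w 0‖ := by
  have hwconst : ∀ s ∈ Set.Icc 0 t, w s = w 0 := by
    apply constant_of_has_deriv_right_zero (hcw.continuousOn)
    intro s hs
    exact ((hw s hs.1).hasDerivWithinAt)
  have hwt : w t = w 0 := hwconst t (Set.right_mem_Icc.mpr ht)
  constructor
  · rw [hwt]
  · set g : ℝ → ℂ := fun s => z s - ((s : ℝ) : ℂ) * (2 * w 0) with hg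
    have hgconst : ∀ s ∈ Set.Icc 0 t, g s = g 0 := by
      apply constant_of_has_deriv_right_zero
      · apply Continuous.continuousOn
        exact hcz.sub ((Complex.continuous_ofReal).mul continuous_const)
      · intro s hs
        have h1 : HasDerivAt (fun s : ℝ => ((s : ℝ) : ℂ) * (2 * w 0)) (2 * w 0) s := by
          have h0 : HasDerivAt (fun y : ℝ => ((y : ℝ) : ℂ)) 1 s := by
            simpa using (hasDerivAt_id s).ofReal_comp
          simpa using h0.mul_const (2 * w 0)
        have h2 := (hz s hs.1).sub h1
        have h3 : 2 * w s - 2 * w 0 = 0 := by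
          rw [hwconst s (Set.mem_Icc.mpr ⟨hs.1, hs.2.le⟩)]; ring
        rw [h3] at h2
        exact h2.hasDerivWithinAt
    have hgt : g t = g 0 := hgconst t (Set.right_mem_Icc.mpr ht)
    have hzt : z t = z 0 + ((t : ℝ) : ℂ) * (2 * w 0) := by
      have := hgt
      simp only [hg, Complex.ofReal_zero, zero_mul, sub_zero] at this
      linear_combination this
    rw [hzt]
    calc ‖z 0 + ((t : ℝ) : ℂ) * (2 * w 0)‖ ≤ ‖z 0‖ + ‖((t : ℝ) : ℂ) * (2 * w 0)‖ :=
          norm_add_le _ _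
      _ = ‖z 0‖ + 2 * t * ‖w 0‖ := by
          simp only [norm_mul, Complex.norm_real, Real.norm_eq_abs, abs_of_nonneg ht,
            Complex.norm_ofNat]
          ring

/-- growth bound for degenerate (linear drift) modes -/
lemma degenerate_growth {τ t : ℝ} (hτ : 0 < τ) (ht : 0 ≤ t)
    {X Y X0 Y0 B : ℝ} (hX0 : 0 ≤ X0) (hY0 : 0 ≤ Y0) (hX : X = X0)
    (hY : Y ≤ Y0 + 2 * t * X0) (hYnn : 0 ≤ Y)
    (hB : 2 + 8 / τ ^ 2 ≤ B) :
    X ^ 2 + Y ^ 2 ≤ B * Real.exp (2 * τ * t) * (X0 ^ 2 + Y0 ^ 2) := by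
  have he1 : (1 : ℝ) ≤ Real.exp (2 * τ * t) := Real.one_le_exp (by positivity)
  have he2 : τ ^ 2 * t ^ 2 ≤ Real.exp (2 * τ * t) := by
    have h1 : τ * t + 1 ≤ Real.exp (τ * t) := Real.add_one_le_exp (τ * t)
    have h2 : (τ * t + 1) ^ 2 ≤ Real.exp (τ * t) ^ 2 := by
      apply pow_le_pow_left₀ (by positivity) h1
    have h3 : Real.exp (τ * t) ^ 2 = Real.exp (2 * τ * t) := by
      rw [sq, ← Real.exp_add]; ring_nf
    nlinarith [mul_nonneg (mul_nonneg hτ.le ht) (mul_nonneg hτ.le ht)]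
  have hkey : X ^ 2 + Y ^ 2 ≤ (2 + 8 * t ^ 2) * (X0 ^ 2 + Y0 ^ 2) := by
    have hY2 : Y ^ 2 ≤ (Y0 + 2 * t * X0) ^ 2 := by
      apply pow_le_pow_left₀ hYnn hY
    nlinarith [sq_nonneg (Y0 - 2 * t * X0), mul_nonneg ht hX0, sq_nonneg X0, sq_nonneg Y0,
      mul_nonneg (mul_nonneg ht ht) (sq_nonneg X0)]
  have hgrow : 2 + 8 * t ^ 2 ≤ B * Real.exp (2 * τ * t) := by
    have hr : (8 / τ ^ 2) * (τ ^ 2 * t ^ 2) = 8 * t ^ 2 := by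
      field_simp
    have h4 : (8 / τ ^ 2) * (τ ^ 2 * t ^ 2) ≤ (8 / τ ^ 2) * Real.exp (2 * τ * t) := by
      apply mul_le_mul_of_nonneg_left he2 (by positivity)
    have h5 : (2 + 8 / τ ^ 2) * Real.exp (2 * τ * t) ≤ B * Real.exp (2 * τ * t) := by
      apply mul_le_mul_of_nonneg_right hB (by positivity)
    nlinarith
  calc X ^ 2 + Y ^ 2 ≤ (2 + 8 * t ^ 2) * (X0 ^ 2 + Y0 ^ 2) := hkey
    _ ≤ B * Real.exp (2 * τ * t) * (X0 ^ 2 + Y0 ^ 2) := by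
        apply mul_le_mul_of_nonneg_right hgrow (by positivity)

/-- Per-mode energy estimate for the linearized system. -/
lemma ode_mode {u v : ℝ → ℂ} {a τ : ℝ} (ha : 0 ≤ a) (hτ : 0 < τ)
    (hcu : Continuous u) (hcv : Continuous v)
    (hu : ∀ s, 0 ≤ s → HasDerivAt u (((a : ℝ) : ℂ) * v s) s)
    (hv : ∀ s, 0 ≤ s → HasDerivAt v (((2 - a : ℝ) : ℂ) * u s) s)
    (hτa : a ≤ 2 → Real.sqrt a * Real.sqrt (2 - a) ≤ τ)
    {B : ℝ} (hB0 : 2 + 8 / τ ^ 2 ≤ B)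
    (hB1 : a ≠ 0 → a ≠ 2 → max (1 / (|2 - a| / a)) 1 * max (|2 - a| / a) 1 ≤ B) :
    ∀ t, 0 ≤ t →
      ‖u t‖ ^ 2 + ‖v t‖ ^ 2 ≤ B * Real.exp (2 * τ * t) * (‖u 0‖ ^ 2 + ‖v 0‖ ^ 2) := by
  intro t ht
  by_cases ha0 : a = 0
  · subst ha0
    have hw : ∀ s, 0 ≤ s → HasDerivAt u 0 s := by
      intro s hs; simpa using hu s hs
    have hz : ∀ s, 0 ≤ s → HasDerivAt v (2 * u s) s := by
      intro s hs
      have h2 : ((2 - 0 : ℝ) : ℂ) = 2 := by norm_num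
      simpa [h2] using hv s hs
    obtain ⟨hX, hY⟩ := degenerate_bound hcu hcv hw hz ht
    exact degenerate_growth hτ ht (norm_nonneg _) (norm_nonneg _) hX hY (norm_nonneg _) hB0
  by_cases ha2 : a = 2
  · subst ha2
    have hw : ∀ s, 0 ≤ s → HasDerivAt v 0 s := by
      intro s hs; simpa using hv s hs
    have hz : ∀ s, 0 ≤ s → HasDerivAt u (2 * v s) s := by
      intro s hs
      have h2 : ((2 : ℝ) : ℂ) = 2 := by norm_num
      simpa [h2] using hu s hs
    obtain ⟨hX, hY⟩ := degenerate_bound hcv hcu hw hz ht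
    have := degenerate_growth hτ ht (norm_nonneg (v 0)) (norm_nonneg (u 0)) hX hY
      (norm_nonneg _) hB0
    calc ‖u t‖ ^ 2 + ‖v t‖ ^ 2 = ‖v t‖ ^ 2 + ‖u t‖ ^ 2 := by ring
      _ ≤ B * Real.exp (2 * τ * t) * (‖v 0‖ ^ 2 + ‖u 0‖ ^ 2) := this
      _ = B * Real.exp (2 * τ * t) * (‖u 0‖ ^ 2 + ‖v 0‖ ^ 2) := by ring
  · have hapos : 0 < a := lt_of_le_of_ne ha (Ne.symm ha0)
    set c : ℝ := |2 - a| / a with hcdef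
    have hc : 0 < c := by
      apply div_pos _ hapos
      rw [abs_pos]
      intro h
      exact ha2 (by linarith)
    set h : ℝ → ℝ := fun s => c * ‖u s‖ ^ 2 + ‖v s‖ ^ 2 with hhdef
    set h' : ℝ → ℝ := fun s =>
      2 * (c * a + (2 - a)) * ((v s).re * (u s).re + (v s).im * (u s).im) with hh'def
    have hhnn : ∀ s, 0 ≤ h s := by
      intro s
      have := sq_nonneg ‖u s‖
      have := sq_nonneg ‖v s‖
      positivity
    have hderiv : ∀ s, 0 ≤ s → HasDerivAt h (h' s) s := by
      intro s hs
      have h1 := (normSq_hasDerivAt (hu s hs)).const_mul c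
      have h2 := normSq_hasDerivAt (hv s hs)
      have h3 := h1.add h2
      refine h3.congr_deriv ?_
      simp only [Complex.mul_re, Complex.mul_im, Complex.ofReal_re, Complex.ofReal_im]
      ring
    have hbound : ∀ s, 0 ≤ s → |h' s| ≤ 2 * τ * h s := by
      intro s hs
      set x := ‖u s‖
      set y := ‖v s‖
      have hx0 : 0 ≤ x := norm_nonneg _
      have hy0 : 0 ≤ y := norm_nonneg _
      have hD : |(v s).re * (u s).re + (v s).im * (u s).im| ≤ y * x :=
        cauchy_schwarz_re (v s) (u s)
      rcases lt_or_gt_of_ne (fun h : a = 2 => ha2 h) with hlt | hgt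
      · have habs : |2 - a| = 2 - a := abs_of_pos (by linarith)
        have hca : c * a = 2 - a := by
          rw [hcdef, habs]; field_simp
        set sa := Real.sqrt a with hsadef
        set sb := Real.sqrt (2 - a) with hsbdef
        have hsa2 : sa ^ 2 = a := Real.sq_sqrt hapos.le
        have hsb2 : sb ^ 2 = 2 - a := Real.sq_sqrt (by linarith)
        have hsa0 : 0 < sa := Real.sqrt_pos.mpr hapos
        have hsb0 : 0 < sb := Real.sqrt_pos.mpr (by linarith)
        have hτ' : sa * sb ≤ τ := hτa (by linarith)
        have hkey : 4 * (2 - a) * (x * y) ≤ 2 * τ * (c * x ^ 2 + y ^ 2) := by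
          have hAM : 2 * (sa * sb) * (x * y) ≤ sb ^ 2 * x ^ 2 + sa ^ 2 * y ^ 2 := by
            nlinarith [sq_nonneg (sb * x - sa * y)]
          have hco : c * x ^ 2 + y ^ 2 = (sb ^ 2 * x ^ 2 + sa ^ 2 * y ^ 2) / sa ^ 2 := by
            rw [hcdef, habs, ← hsb2, ← hsa2]
            field_simp
          rw [hco, ← mul_div_assoc, le_div_iff₀ (by positivity : (0:ℝ) < sa ^ 2), ← hsb2]
          nlinarith [mul_nonneg (sub_nonneg.mpr hτ')
              (by positivity : (0:ℝ) ≤ sb ^ 2 * x ^ 2 + sa ^ 2 * y ^ 2),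
            mul_nonneg (by positivity : (0:ℝ) ≤ sa * sb) (sub_nonneg.mpr hAM)]
        calc |h' s| = 2 * (c * a + (2 - a)) * |(v s).re * (u s).re + (v s).im * (u s).im| := by
              rw [hh'def, abs_mul]
              congr 1
              rw [abs_of_nonneg (by rw [hca]; linarith)]
          _ ≤ 2 * (c * a + (2 - a)) * (y * x) := by
              apply mul_le_mul_of_nonneg_left hD (by rw [hca]; linarith)
          _ = 4 * (2 - a) * (x * y) := by rw [hca]; ring
          _ ≤ 2 * τ * (c * x ^ 2 + y ^ 2) := hkey
          _ = 2 * τ * h s := by rw [hhdef]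
      · have habs : |2 - a| = a - 2 := by
          rw [abs_of_neg (by linarith)]; ring
        have hca : c * a = a - 2 := by
          rw [hcdef, habs]; field_simp
        have hzero : c * a + (2 - a) = 0 := by rw [hca]; ring
        have : h' s = 0 := by rw [hh'def, hzero]; ring
        rw [this, abs_zero]
        positivity
    have hcont : ContinuousOn h (Set.Icc 0 t) := by
      apply Continuous.continuousOn
      exact (continuous_const.mul ((hcu.norm).pow 2)).add ((hcv.norm).pow 2)
    have hg := norm_le_gronwallBound_of_norm_deriv_right_le (f := h) (f' := h')
      (δ := h 0) (K := 2 * τ) (ε := 0) (a := 0) (b := t) hcont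
      (fun s hs => (hderiv s hs.1).hasDerivWithinAt)
      (by rw [Real.norm_eq_abs, abs_of_nonneg (hhnn 0)])
      (fun s hs => by
        rw [Real.norm_eq_abs, Real.norm_eq_abs, abs_of_nonneg (hhnn s), add_zero]
        exact hbound s hs.1)
      t (Set.right_mem_Icc.mpr ht)
    rw [gronwallBound_ε0, Real.norm_eq_abs, abs_of_nonneg (hhnn t), sub_zero] at hg
    have hfinal1 : ‖u t‖ ^ 2 + ‖v t‖ ^ 2 ≤ max (1 / c) 1 * h t := by
      rw [hhdef]
      have h1 : ‖u t‖ ^ 2 = (1 / c) * (c * ‖u t‖ ^ 2) := by field_simp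
      have h2 : (1 / c) * (c * ‖u t‖ ^ 2) ≤ max (1 / c) 1 * (c * ‖u t‖ ^ 2) := by
        apply mul_le_mul_of_nonneg_right (le_max_left _ _) (by positivity)
      have h3 : ‖v t‖ ^ 2 ≤ max (1 / c) 1 * ‖v t‖ ^ 2 := by
        have := mul_le_mul_of_nonneg_right (le_max_right (1/c) 1) (sq_nonneg ‖v t‖)
        linarith
      have h12 : ‖u t‖ ^ 2 ≤ max (1 / c) 1 * (c * ‖u t‖ ^ 2) := by
        calc ‖u t‖ ^ 2 = (1 / c) * (c * ‖u t‖ ^ 2) := h1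
          _ ≤ max (1 / c) 1 * (c * ‖u t‖ ^ 2) := h2
      calc ‖u t‖ ^ 2 + ‖v t‖ ^ 2 ≤ max (1 / c) 1 * (c * ‖u t‖ ^ 2) + max (1 / c) 1 * ‖v t‖ ^ 2 := by
            linarith
        _ = max (1 / c) 1 * (c * ‖u t‖ ^ 2 + ‖v t‖ ^ 2) := by ring
    have hfinal2 : h 0 ≤ max c 1 * (‖u 0‖ ^ 2 + ‖v 0‖ ^ 2) := by
      show c * ‖u 0‖ ^ 2 + ‖v 0‖ ^ 2 ≤ max c 1 * (‖u 0‖ ^ 2 + ‖v 0‖ ^ 2)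
      have m1 := mul_le_mul_of_nonneg_right (le_max_left c 1) (sq_nonneg ‖u 0‖)
      have m2 := mul_le_mul_of_nonneg_right (le_max_right c 1) (sq_nonneg ‖v 0‖)
      nlinarith [m1, m2]
    have hBc := hB1 ha0 ha2
    have hBnn : 0 ≤ max (1 / c) 1 := by positivity
    calc ‖u t‖ ^ 2 + ‖v t‖ ^ 2 ≤ max (1 / c) 1 * h t := hfinal1
      _ ≤ max (1 / c) 1 * (h 0 * Real.exp (2 * τ * t)) := by
          apply mul_le_mul_of_nonneg_left hg hBnn
      _ ≤ max (1 / c) 1 * ((max c 1 * (‖u 0‖ ^ 2 + ‖v 0‖ ^ 2)) * Real.exp (2 * τ * t)) := by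
          apply mul_le_mul_of_nonneg_left _ hBnn
          apply mul_le_mul_of_nonneg_right hfinal2 (Real.exp_nonneg _)
      _ = (max (1 / c) 1 * max c 1) * Real.exp (2 * τ * t) * (‖u 0‖ ^ 2 + ‖v 0‖ ^ 2) := by
          ring
      _ ≤ B * Real.exp (2 * τ * t) * (‖u 0‖ ^ 2 + ‖v 0‖ ^ 2) := by
          apply mul_le_mul_of_nonneg_right _ (by positivity)
          apply mul_le_mul_of_nonneg_right _ (Real.exp_nonneg _)
          rw [hcdef] at hBc ⊢
          exact hBc

lemma fCoeff_neg (q : ℝ) (f : ℝ → ℂ) (k : ℤ) :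
    fCoeff q (fun x => -(f x)) k = -fCoeff q f k := by
  rw [fCoeff_eq, fCoeff_eq, ← intervalIntegral.integral_neg]
  congr 1
  funext x
  ring

lemma fCoeff_add (q : ℝ) {f g : ℝ → ℂ} (hf : Continuous f) (hg : Continuous g) (k : ℤ) :
    fCoeff q (fun x => f x + g x) k = fCoeff q f k + fCoeff q g k := by
  rw [fCoeff_eq, fCoeff_eq, fCoeff_eq,
    ← intervalIntegral.integral_add (f := fun x => f x * eK q k x) (g := fun x => g x * eK q k x)
      ((hf.mul (eK_continuous q k)).intervalIntegrable _ _)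
      ((hg.mul (eK_continuous q k)).intervalIntegrable _ _)]
  congr 1
  funext x
  ring

lemma fCoeff_const_mul (q : ℝ) (c : ℂ) (f : ℝ → ℂ) (k : ℤ) :
    fCoeff q (fun x => c * f x) k = c * fCoeff q f k := by
  rw [fCoeff_eq, fCoeff_eq, ← intervalIntegral.integral_const_mul]
  congr 1
  funext x
  ring

lemma ofReal_comp_deriv {g : ℝ → ℝ} (hg : Differentiable ℝ g) :
    deriv (fun x => ((g x : ℝ) : ℂ)) = fun x => ((deriv g x : ℝ) : ℂ) :=
  funext fun x => (((hg x).hasDerivAt).ofReal_comp).deriv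

lemma ofReal_contDiff {g : ℝ → ℝ} (hg : ContDiff ℝ ∞ g) :
    ContDiff ℝ ∞ (fun x => ((g x : ℝ) : ℂ)) :=
  Complex.ofRealCLM.contDiff.comp hg

lemma ofReal_periodic {g : ℝ → ℝ} {p : ℝ} (hg : Function.Periodic g p) :
    Function.Periodic (fun x => ((g x : ℝ) : ℂ)) p :=
  fun x => congrArg Complex.ofReal (hg x)

/-- Fourier coefficient of the second derivative of a (complexified) real function. -/
lemma fCoeff_deriv2_ofReal (q : ℝ) (hq : 0 < q) {g : ℝ → ℝ} (hg : ContDiff ℝ ∞ g)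
    (hper : Function.Periodic g (2 * q * Real.pi)) (k : ℤ) :
    fCoeff q (fun x => ((deriv (deriv g) x : ℝ) : ℂ)) k
      = ((-(((k : ℝ) / q) ^ 2) : ℝ) : ℂ) * fCoeff q (fun x => ((g x : ℝ) : ℂ)) k := by
  set G : ℝ → ℂ := fun x => ((g x : ℝ) : ℂ) with hG
  have hGc : ContDiff ℝ ∞ G := ofReal_contDiff hg
  have hGper : Function.Periodic G (2 * q * Real.pi) := ofReal_periodic hper
  have hg1 : Differentiable ℝ g := hg.differentiable (by simp)
  have hgd : ContDiff ℝ ∞ (deriv g) := (contDiff_infty_iff_deriv.mp hg).2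
  have hd1 : deriv G = fun x => ((deriv g x : ℝ) : ℂ) := ofReal_comp_deriv hg1
  have hd2 : deriv (deriv G) = fun x => ((deriv (deriv g) x : ℝ) : ℂ) := by
    rw [hd1]
    exact ofReal_comp_deriv (hgd.differentiable (by simp))
  have hstep1 : fCoeff q (deriv G) k = Complex.I * (k : ℂ) / (q : ℂ) * fCoeff q G k :=
    fCoeff_deriv q hq (hGc.differentiable (by simp))
      ((contDiff_infty_iff_deriv.mp hGc).2.continuous) hGper k
  have hGd : ContDiff ℝ ∞ (deriv G) := (contDiff_infty_iff_deriv.mp hGc).2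
  have hstep2 : fCoeff q (deriv (deriv G)) k
      = Complex.I * (k : ℂ) / (q : ℂ) * fCoeff q (deriv G) k :=
    fCoeff_deriv q hq (hGd.differentiable (by simp))
      ((contDiff_infty_iff_deriv.mp hGd).2.continuous) (periodic_deriv hGper) k
  have hIsq : (Complex.I * (k : ℂ) / (q : ℂ)) * (Complex.I * (k : ℂ) / (q : ℂ))
      = ((-(((k : ℝ) / q) ^ 2) : ℝ) : ℂ) := by
    have : (Complex.I * (k : ℂ) / (q : ℂ)) * (Complex.I * (k : ℂ) / (q : ℂ))
        = Complex.I ^ 2 * ((k : ℂ) / (q : ℂ)) ^ 2 := by ring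
    rw [this, Complex.I_sq]
    push_cast
    ring
  calc fCoeff q (fun x => ((deriv (deriv g) x : ℝ) : ℂ)) k
      = fCoeff q (deriv (deriv G)) k := by rw [hd2]
    _ = Complex.I * (k : ℂ) / (q : ℂ) * (Complex.I * (k : ℂ) / (q : ℂ) * fCoeff q G k) := by
        rw [hstep2, hstep1]
    _ = ((-(((k : ℝ) / q) ^ 2) : ℝ) : ℂ) * fCoeff q G k := by
        rw [← mul_assoc, hIsq]

end NLSAux


set_option maxHeartbeats 1000000 in
open NLSAux in
/-- **Growth bound for the linearized NLS flow.** For smooth `2qπ`-periodic solutions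
of `∂_tφ = −∂_x²ψ`, `∂_tψ = ∂_x²φ + 2φ` (the linearization of the focusing cubic NLS
around the Stokes solution `e^{it}`), and with `τ = sup_k Re(|k/q|√(2−(k/q)²)) > 0`,
one has `‖φ(t)‖_{H^{s'}} + ‖ψ(t)‖_{H^{s'}} ≤ C e^{τt}(‖φ(0)‖_{H^{s'}} + ‖ψ(0)‖_{H^{s'}})`
for `t ≥ 0`, with `C` depending only on `q` and `s'`. -/
theorem linearized_NLS_growth_bound
    (q : ℝ) (hq : 0 < q) (τ : ℝ) (hτpos : 0 < τ)
    (hτub : ∀ k : ℤ, ((k : ℝ) / q) ^ 2 ≤ 2 →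
      |(k : ℝ) / q| * Real.sqrt (2 - ((k : ℝ) / q) ^ 2) ≤ τ)
    (hτmem : ∃ k : ℤ, ((k : ℝ) / q) ^ 2 ≤ 2 ∧
      τ = |(k : ℝ) / q| * Real.sqrt (2 - ((k : ℝ) / q) ^ 2))
    (s' : ℝ) (hs' : 0 ≤ s') :
    ∃ C : ℝ, 0 < C ∧
    ∀ φ ψ : ℝ → ℝ → ℝ,
      ContDiff ℝ (⊤ : ℕ∞) (fun p : ℝ × ℝ => φ p.1 p.2) →
      ContDiff ℝ (⊤ : ℕ∞) (fun p : ℝ × ℝ => ψ p.1 p.2) →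
      (∀ t : ℝ, 0 ≤ t → Function.Periodic (fun x => φ x t) (2 * q * Real.pi)) →
      (∀ t : ℝ, 0 ≤ t → Function.Periodic (fun x => ψ x t) (2 * q * Real.pi)) →
      (∀ x t : ℝ, 0 ≤ t →
        deriv (fun τ' => φ x τ') t = -(deriv (deriv (fun y => ψ y t)) x)) →
      (∀ x t : ℝ, 0 ≤ t →
        deriv (fun τ' => ψ x τ') t = deriv (deriv (fun y => φ y t)) x + 2 * φ x t) →
      ∀ t : ℝ, 0 ≤ t →
        hNorm q s' (fun x => ((φ x t : ℝ) : ℂ)) + hNorm q s' (fun x => ((ψ x t : ℝ) : ℂ)) ≤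
          C * Real.exp (τ * t) *
            (hNorm q s' (fun x => ((φ x 0 : ℝ) : ℂ)) +
             hNorm q s' (fun x => ((ψ x 0 : ℝ) : ℂ))) := by
  classical
  set N : ℕ := ⌈Real.sqrt 3 * q⌉₊ with hN
  set wB : ℤ → ℝ := fun j =>
    max (1 / (|2 - ((j : ℝ) / q) ^ 2| / ((j : ℝ) / q) ^ 2)) 1
      * max (|2 - ((j : ℝ) / q) ^ 2| / ((j : ℝ) / q) ^ 2) 1 with hwB
  have hwBnn : ∀ j, 0 ≤ wB j := fun j =>
    mul_nonneg (le_trans zero_le_one (le_max_right _ 1))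
      (le_trans zero_le_one (le_max_right _ 1))
  set S : ℝ := ∑ j ∈ Finset.Icc (-(N : ℤ)) (N : ℤ), wB j with hS
  have hSnn : 0 ≤ S := Finset.sum_nonneg fun j _ => hwBnn j
  set Bm : ℝ := max (2 + 8 / τ ^ 2) (max 3 S) with hBm
  have hBmpos : 0 < Bm := lt_of_lt_of_le (by positivity) (le_max_left _ _)
  -- the uniform per-mode constant bound
  have hBk : ∀ k : ℤ, ((k : ℝ) / q) ^ 2 ≠ 0 → ((k : ℝ) / q) ^ 2 ≠ 2 →
      max (1 / (|2 - ((k : ℝ) / q) ^ 2| / ((k : ℝ) / q) ^ 2)) 1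
        * max (|2 - ((k : ℝ) / q) ^ 2| / ((k : ℝ) / q) ^ 2) 1 ≤ Bm := by
    intro k h0 h2
    by_cases hbig : (3 : ℝ) ≤ ((k : ℝ) / q) ^ 2
    · set a := ((k : ℝ) / q) ^ 2 with hadef
      have hapos : (0 : ℝ) < a := by linarith
      have habs : |2 - a| = a - 2 := by rw [abs_of_neg (by linarith : 2 - a < 0)]; ring
      have hc1 : |2 - a| / a ≤ 1 := by rw [habs, div_le_one hapos]; linarith
      have hinv : 1 / (|2 - a| / a) ≤ 3 := by
        rw [habs, one_div_div, div_le_iff₀ (by linarith : (0:ℝ) < a - 2)]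
        linarith
      have hmax1 : max (1 / (|2 - a| / a)) 1 ≤ 3 := max_le hinv (by norm_num)
      have hmax2 : max (|2 - a| / a) 1 = 1 := max_eq_right hc1
      calc max (1 / (|2 - a| / a)) 1 * max (|2 - a| / a) 1
          = max (1 / (|2 - a| / a)) 1 * 1 := by rw [hmax2]
        _ ≤ 3 := by rw [mul_one]; exact hmax1
        _ ≤ Bm := le_trans (le_max_left 3 S) (le_max_right _ _)
    · push_neg at hbig
      have hkmem : k ∈ Finset.Icc (-(N : ℤ)) (N : ℤ) := by
        have h3 : (k : ℝ) ^ 2 < 3 * q ^ 2 := by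
          rw [div_pow] at hbig
          calc (k : ℝ) ^ 2 = ((k : ℝ) ^ 2 / q ^ 2) * q ^ 2 := by field_simp
            _ < 3 * q ^ 2 := by apply mul_lt_mul_of_pos_right hbig (by positivity)
        have h4 : Real.sqrt ((k : ℝ) ^ 2) < Real.sqrt (3 * q ^ 2) :=
          Real.sqrt_lt_sqrt (sq_nonneg _) h3
        rw [Real.sqrt_sq_eq_abs, show (3 : ℝ) * q ^ 2 = (Real.sqrt 3 * q) ^ 2 by
            rw [mul_pow, Real.sq_sqrt (by norm_num : (0:ℝ) ≤ 3)],
          Real.sqrt_sq (by positivity)] at h4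
        have h5 : |(k : ℝ)| ≤ (N : ℝ) := le_trans h4.le (Nat.le_ceil _)
        have h6 : |k| ≤ (N : ℤ) := by
          have h5' : ((|k| : ℤ) : ℝ) ≤ ((N : ℤ) : ℝ) := by push_cast; exact h5
          exact_mod_cast h5'
        rw [Finset.mem_Icc]
        exact ⟨neg_le_of_abs_le h6, le_of_abs_le h6⟩
      have h7 : wB k ≤ S := Finset.single_le_sum (fun j _ => hwBnn j) hkmem
      calc max (1 / (|2 - ((k : ℝ) / q) ^ 2| / ((k : ℝ) / q) ^ 2)) 1
            * max (|2 - ((k : ℝ) / q) ^ 2| / ((k : ℝ) / q) ^ 2) 1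
          = wB k := by simp only [hwB]
        _ ≤ S := h7
        _ ≤ Bm := le_trans (le_max_right 3 S) (le_max_right _ _)
  refine ⟨2 * Real.sqrt Bm, by positivity, ?_⟩
  intro φ ψ hφ hψ hperφ hperψ pde1 pde2 t ht
  have hphi : ContDiff ℝ ∞ (fun p : ℝ × ℝ => φ p.1 p.2) := hφ.of_le (by simp)
  have hpsi : ContDiff ℝ ∞ (fun p : ℝ × ℝ => ψ p.1 p.2) := hψ.of_le (by simp)
  set u : ℤ → ℝ → ℂ := fun k s => fCoeff q (fun x => ((φ x s : ℝ) : ℂ)) k with hu_def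
  set v : ℤ → ℝ → ℂ := fun k s => fCoeff q (fun x => ((ψ x s : ℝ) : ℂ)) k with hv_def
  -- the mode ODEs
  have hu' : ∀ (k : ℤ) (s : ℝ), 0 ≤ s →
      HasDerivAt (u k) (((((k : ℝ) / q) ^ 2 : ℝ) : ℂ) * v k s) s := by
    intro k s hs
    have h := hasDerivAt_fCoeff_time q hphi k s
    have e : fCoeff q (fun x => ((pt φ x s : ℝ) : ℂ)) k
        = ((((k : ℝ) / q) ^ 2 : ℝ) : ℂ) * v k s := by
      have e0 : (fun x => ((pt φ x s : ℝ) : ℂ))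
          = fun x => -(((deriv (deriv (fun y => ψ y s)) x : ℝ) : ℂ)) := by
        funext x
        simp only [pt]
        rw [pde1 x s hs]
        push_cast
        ring
      rw [e0, fCoeff_neg,
        fCoeff_deriv2_ofReal q hq (curry_contDiff' hpsi s) (hperψ s hs) k]
      simp only [hv_def]
      push_cast
      ring
    exact e ▸ h
  have hv' : ∀ (k : ℤ) (s : ℝ), 0 ≤ s →
      HasDerivAt (v k) (((2 - ((k : ℝ) / q) ^ 2 : ℝ) : ℂ) * u k s) s := by
    intro k s hs
    have h := hasDerivAt_fCoeff_time q hpsi k s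
    have hφt := curry_contDiff' hphi s
    have hd2c : Continuous (fun x => ((deriv (deriv (fun y => φ y s)) x : ℝ) : ℂ)) := by
      apply Complex.continuous_ofReal.comp
      exact ((contDiff_infty_iff_deriv.mp (contDiff_infty_iff_deriv.mp hφt).2).2).continuous
    have hc2 : Continuous (fun x => ((2 : ℝ) : ℂ) * ((φ x s : ℝ) : ℂ)) :=
      continuous_const.mul (Complex.continuous_ofReal.comp hφt.continuous)
    have e : fCoeff q (fun x => ((pt ψ x s : ℝ) : ℂ)) k
        = ((2 - ((k : ℝ) / q) ^ 2 : ℝ) : ℂ) * u k s := by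
      have e0 : (fun x => ((pt ψ x s : ℝ) : ℂ))
          = fun x => ((deriv (deriv (fun y => φ y s)) x : ℝ) : ℂ)
              + ((2 : ℝ) : ℂ) * ((φ x s : ℝ) : ℂ) := by
        funext x
        simp only [pt]
        rw [pde2 x s hs]
        push_cast
        ring
      rw [e0, fCoeff_add q hd2c hc2 k,
        fCoeff_deriv2_ofReal q hq hφt (hperφ s hs) k, fCoeff_const_mul]
      simp only [hu_def]
      push_cast
      ring
    exact e ▸ h
  have hcu : ∀ k : ℤ, Continuous (u k) := by
    intro k
    apply continuous_iff_continuousAt.mpr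
    intro s
    exact (hasDerivAt_fCoeff_time q hphi k s).differentiableAt.continuousAt
  have hcv : ∀ k : ℤ, Continuous (v k) := by
    intro k
    apply continuous_iff_continuousAt.mpr
    intro s
    exact (hasDerivAt_fCoeff_time q hpsi k s).differentiableAt.continuousAt
  -- the per-mode growth bound
  have hmode : ∀ k : ℤ, ‖u k t‖ ^ 2 + ‖v k t‖ ^ 2
      ≤ Bm * Real.exp (2 * τ * t) * (‖u k 0‖ ^ 2 + ‖v k 0‖ ^ 2) := by
    intro k
    apply ode_mode (a := ((k : ℝ) / q) ^ 2) (sq_nonneg _) hτpos (hcu k) (hcv k)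
      (hu' k) (hv' k) ?_ ?_ (hBk k) t ht
    · intro h2
      rw [Real.sqrt_sq_eq_abs]
      exact hτub k h2
    · exact le_max_left _ _
  -- weights and summability
  set w : ℤ → ℝ := fun k => (1 + |(k : ℝ) / q|) ^ (2 * s') with hw
  have hwnn : ∀ k, 0 ≤ w k := fun k => Real.rpow_nonneg (by positivity) _
  have hSφt : Summable (fun k : ℤ => w k * ‖u k t‖ ^ 2) :=
    summable_weight q hq s' (ofReal_contDiff (curry_contDiff' hphi t))
      (ofReal_periodic (hperφ t ht))
  have hSψt : Summable (fun k : ℤ => w k * ‖v k t‖ ^ 2) :=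
    summable_weight q hq s' (ofReal_contDiff (curry_contDiff' hpsi t))
      (ofReal_periodic (hperψ t ht))
  have hSφ0 : Summable (fun k : ℤ => w k * ‖u k 0‖ ^ 2) :=
    summable_weight q hq s' (ofReal_contDiff (curry_contDiff' hphi 0))
      (ofReal_periodic (hperφ 0 le_rfl))
  have hSψ0 : Summable (fun k : ℤ => w k * ‖v k 0‖ ^ 2) :=
    summable_weight q hq s' (ofReal_contDiff (curry_contDiff' hpsi 0))
      (ofReal_periodic (hperψ 0 le_rfl))
  have hterm : ∀ k : ℤ, w k * ‖u k t‖ ^ 2 + w k * ‖v k t‖ ^ 2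
      ≤ Bm * Real.exp (2 * τ * t) * (w k * ‖u k 0‖ ^ 2 + w k * ‖v k 0‖ ^ 2) := by
    intro k
    have h2 := mul_le_mul_of_nonneg_left (hmode k) (hwnn k)
    calc w k * ‖u k t‖ ^ 2 + w k * ‖v k t‖ ^ 2
        = w k * (‖u k t‖ ^ 2 + ‖v k t‖ ^ 2) := by ring
      _ ≤ w k * (Bm * Real.exp (2 * τ * t) * (‖u k 0‖ ^ 2 + ‖v k 0‖ ^ 2)) := h2
      _ = Bm * Real.exp (2 * τ * t) * (w k * ‖u k 0‖ ^ 2 + w k * ‖v k 0‖ ^ 2) := by ring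
  have htsum : (∑' k : ℤ, w k * ‖u k t‖ ^ 2) + (∑' k : ℤ, w k * ‖v k t‖ ^ 2)
      ≤ Bm * Real.exp (2 * τ * t)
          * ((∑' k : ℤ, w k * ‖u k 0‖ ^ 2) + (∑' k : ℤ, w k * ‖v k 0‖ ^ 2)) := by
    have h1 := Summable.tsum_le_tsum hterm (hSφt.add hSψt) ((hSφ0.add hSψ0).mul_left _)
    rwa [Summable.tsum_add hSφt hSψt, tsum_mul_left, Summable.tsum_add hSφ0 hSψ0] at h1
  -- identify hNorms
  have hNφt : hNorm q s' (fun x => ((φ x t : ℝ) : ℂ))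
      = Real.sqrt (∑' k : ℤ, w k * ‖u k t‖ ^ 2) := rfl
  have hNψt : hNorm q s' (fun x => ((ψ x t : ℝ) : ℂ))
      = Real.sqrt (∑' k : ℤ, w k * ‖v k t‖ ^ 2) := rfl
  have hNφ0 : hNorm q s' (fun x => ((φ x 0 : ℝ) : ℂ))
      = Real.sqrt (∑' k : ℤ, w k * ‖u k 0‖ ^ 2) := rfl
  have hNψ0 : hNorm q s' (fun x => ((ψ x 0 : ℝ) : ℂ))
      = Real.sqrt (∑' k : ℤ, w k * ‖v k 0‖ ^ 2) := rfl
  rw [hNφt, hNψt, hNφ0, hNψ0]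
  set At := ∑' k : ℤ, w k * ‖u k t‖ ^ 2 with hAt
  set Bt := ∑' k : ℤ, w k * ‖v k t‖ ^ 2 with hBt
  set A0 := ∑' k : ℤ, w k * ‖u k 0‖ ^ 2 with hA0
  set B0 := ∑' k : ℤ, w k * ‖v k 0‖ ^ 2 with hB0
  have hAtnn : 0 ≤ At := tsum_nonneg fun k => mul_nonneg (hwnn k) (sq_nonneg _)
  have hBtnn : 0 ≤ Bt := tsum_nonneg fun k => mul_nonneg (hwnn k) (sq_nonneg _)
  have hA0nn : 0 ≤ A0 := tsum_nonneg fun k => mul_nonneg (hwnn k) (sq_nonneg _)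
  have hB0nn : 0 ≤ B0 := tsum_nonneg fun k => mul_nonneg (hwnn k) (sq_nonneg _)
  clear_value At Bt A0 B0
  have hE2 : Real.exp (2 * τ * t) = Real.exp (τ * t) ^ 2 := by
    rw [sq, ← Real.exp_add]; ring_nf
  have h1 : (Real.sqrt At + Real.sqrt Bt) ^ 2 ≤ 2 * (At + Bt) := by
    nlinarith [Real.sq_sqrt hAtnn, Real.sq_sqrt hBtnn, Real.sqrt_nonneg At,
      Real.sqrt_nonneg Bt, sq_nonneg (Real.sqrt At - Real.sqrt Bt)]
  have h3 : A0 + B0 ≤ (Real.sqrt A0 + Real.sqrt B0) ^ 2 := by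
    nlinarith [Real.sq_sqrt hA0nn, Real.sq_sqrt hB0nn,
      mul_nonneg (Real.sqrt_nonneg A0) (Real.sqrt_nonneg B0)]
  have h4 : (Real.sqrt At + Real.sqrt Bt) ^ 2
      ≤ (2 * Real.sqrt Bm * Real.exp (τ * t) * (Real.sqrt A0 + Real.sqrt B0)) ^ 2 := by
    have hx : (2 * Real.sqrt Bm * Real.exp (τ * t) * (Real.sqrt A0 + Real.sqrt B0)) ^ 2
        = 4 * Bm * Real.exp (τ * t) ^ 2 * (Real.sqrt A0 + Real.sqrt B0) ^ 2 := by
      rw [mul_pow, mul_pow, mul_pow, Real.sq_sqrt hBmpos.le]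
      ring
    have hstep : 2 * (Bm * Real.exp (2 * τ * t) * (A0 + B0))
        ≤ 2 * (Bm * Real.exp (2 * τ * t) * ((Real.sqrt A0 + Real.sqrt B0) ^ 2)) := by
      apply mul_le_mul_of_nonneg_left _ (by norm_num)
      apply mul_le_mul_of_nonneg_left h3 (by positivity)
    calc (Real.sqrt At + Real.sqrt Bt) ^ 2 ≤ 2 * (At + Bt) := h1
      _ ≤ 2 * (Bm * Real.exp (2 * τ * t) * (A0 + B0)) := by linarith
      _ ≤ 2 * (Bm * Real.exp (2 * τ * t) * ((Real.sqrt A0 + Real.sqrt B0) ^ 2)) := hstep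
      _ ≤ 4 * Bm * Real.exp (τ * t) ^ 2 * (Real.sqrt A0 + Real.sqrt B0) ^ 2 := by
          rw [hE2]
          nlinarith [mul_nonneg (mul_nonneg hBmpos.le (sq_nonneg (Real.exp (τ * t))))
            (sq_nonneg (Real.sqrt A0 + Real.sqrt B0))]
      _ = (2 * Real.sqrt Bm * Real.exp (τ * t) * (Real.sqrt A0 + Real.sqrt B0)) ^ 2 :=
          hx.symm
  have hLnn : 0 ≤ Real.sqrt At + Real.sqrt Bt := by positivity
  have hRnn : 0 ≤ 2 * Real.sqrt Bm * Real.exp (τ * t) * (Real.sqrt A0 + Real.sqrt B0) := by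
    positivity
  calc Real.sqrt At + Real.sqrt Bt
      = Real.sqrt ((Real.sqrt At + Real.sqrt Bt) ^ 2) := (Real.sqrt_sq hLnn).symm
    _ ≤ Real.sqrt ((2 * Real.sqrt Bm * Real.exp (τ * t)
          * (Real.sqrt A0 + Real.sqrt B0)) ^ 2) := Real.sqrt_le_sqrt h4
    _ = 2 * Real.sqrt Bm * Real.exp (τ * t) * (Real.sqrt A0 + Real.sqrt B0) :=
          Real.sqrt_sq hRnn
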